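/- Let x̄ ∈ {−1,+1}ⁿ. Then x̄x̄ᵀ is a vertex of the elliptope Eₙ = {X ∈ S₊ⁿ : diag(X) = 1}, i.e., the normal cone of Eₙ at x̄x̄ᵀ is full-dimensional in Sym(n). In particular, the matrices (−1)^{[x̄_i x̄_j < 0]} · (e_i e_jᵀ + e_j e_iᵀ)/2 for all i, j ∈ [n] belong to the normal cone of Eₙ at x̄x̄ᵀ. -/

import Mathlib

/-!
Pairing `(x i * x j) • (E_ij + E_ji) / 2` with a matrix `Y` of the elliptope gives `x i * x j * Y i j`,
which is at most `1` since a positive semidefinite matrix with unit diagonal satisfies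
`2 a b Y_ij ≤ a² + b²` (its quadratic form at `a e_i - b e_j`), with equality at `Y = x xᵀ`.
So these matrices lie in the normal cone at `x xᵀ`; up to the signs `x i * x j` they span all symmetric
matrices, a space isomorphic to the functions on unordered pairs of indices.
-/

open Matrix

/-- The normal cone, within the space of symmetric matrices (with the trace inner
product), of a set `C` of symmetric matrices at a point `X`. -/
def normalConeM {ι : Type*} [Fintype ι] (C : Set (Matrix ι ι ℝ)) (X : Matrix ι ι ℝ) :
    Set (Matrix ι ι ℝ) :=
  {c | c.IsSymm ∧ ∀ Y ∈ C, (c * Y).trace ≤ (c * X).trace}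

/-- A point of a convex set of symmetric matrices is a vertex if its normal cone is
full-dimensional in the space `Sym(ι)` of symmetric matrices, whose dimension is
`card ι * (card ι + 1) / 2`. -/
def IsVertex {ι : Type*} [Fintype ι] (C : Set (Matrix ι ι ℝ)) (X : Matrix ι ι ℝ) : Prop :=
  X ∈ C ∧ Module.finrank ℝ (Submodule.span ℝ (normalConeM C X))
      = Fintype.card ι * (Fintype.card ι + 1) / 2

namespace Matrix

variable {ι R : Type*}

section Symmetric

variable (ι R) [CommSemiring R]

def symmetricSubmodule : Submodule R (Matrix ι ι R) where
  carrier := {A | A.IsSymm}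
  add_mem' := IsSymm.add
  zero_mem' := isSymm_zero
  smul_mem' c _ h := h.smul c

def symmetricSubmoduleEquivSym2 : symmetricSubmodule ι R ≃ₗ[R] (Sym2 ι → R) where
  toFun A := Sym2.lift ⟨fun i j => A.1 i j, fun i j => A.2.apply j i⟩
  invFun f := ⟨of fun i j => f s(i, j), IsSymm.ext fun i j => by simp [Sym2.eq_swap]⟩
  map_add' A B := by
    funext s
    induction s using Sym2.ind
    rfl
  map_smul' c A := by
    funext s
    induction s using Sym2.ind
    rfl
  left_inv _ := rfl
  right_inv f := by
    funext s
    induction s using Sym2.ind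
    rfl

theorem finrank_symmetricSubmodule [Fintype ι] [StrongRankCondition R] :
    Module.finrank R (symmetricSubmodule ι R) = Fintype.card ι * (Fintype.card ι + 1) / 2 := by
  rw [(symmetricSubmoduleEquivSym2 ι R).finrank_eq, Module.finrank_fintype_fun_eq_card,
    Sym2.card, Nat.choose_two_right, Nat.add_sub_cancel, Nat.mul_comm]

end Symmetric

section SymmSingle

variable [DecidableEq ι]

noncomputable def symmSingle (i j : ι) : Matrix ι ι ℝ := (1 / 2 : ℝ) • (single i j 1 + single j i 1)

theorem isSymm_symmSingle (i j : ι) : (symmSingle i j).IsSymm := by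
  simp [symmSingle, IsSymm, transpose_single, add_comm]

theorem trace_symmSingle_mul [Fintype ι] (i j : ι) {A : Matrix ι ι ℝ} (hA : A.IsSymm) :
    (symmSingle i j * A).trace = A i j := by
  simp only [symmSingle, smul_mul_assoc, add_mul, trace_smul, trace_add, trace_single_mul,
    hA.apply, smul_eq_mul]
  ring

theorem sum_sum_smul_symmSingle [Fintype ι] {A : Matrix ι ι ℝ} (hA : A.IsSymm) :
    ∑ i, ∑ j, A i j • symmSingle i j = A := by
  ext k l
  simp only [symmSingle, one_div, smul_add, smul_single, smul_eq_mul, mul_one, Finset.sum_add_distrib,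
    sum_apply, add_apply, single_apply, ite_and, Finset.sum_ite_irrel, Finset.sum_ite_eq', Finset.mem_univ, if_true,
    Finset.sum_const_zero, hA.apply l k]
  ring

theorem span_symmSingle [Fintype ι] :
    Submodule.span ℝ (Set.range fun p : ι × ι => symmSingle p.1 p.2) = symmetricSubmodule ι ℝ := by
  refine le_antisymm (Submodule.span_le.2 ?_) fun A hA => ?_
  · rintro _ ⟨p, rfl⟩
    exact isSymm_symmSingle p.1 p.2
  · rw [← sum_sum_smul_symmSingle hA]
    exact Submodule.sum_mem _ fun i _ => Submodule.sum_mem _ fun j _ =>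
      Submodule.smul_mem _ _ (Submodule.subset_span ⟨(i, j), rfl⟩)

end SymmSingle

theorem PosSemidef.two_mul_mul_apply_le [Fintype ι] [DecidableEq ι] {A : Matrix ι ι ℝ}
    (hA : A.PosSemidef) (a b : ℝ) (i j : ι) :
    2 * (a * b * A i j) ≤ a * a * A i i + b * b * A j j := by
  have h := hA.dotProduct_mulVec_nonneg (Pi.single i a - Pi.single j b)
  simp only [star_trivial, mulVec_sub, mulVec_single, op_smul_eq_smul, dotProduct_sub, dotProduct_smul,
    sub_dotProduct, single_dotProduct, col_apply, smul_eq_mul, sub_nonneg] at h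
  have hji : A j i = A i j := (isHermitian_iff_isSymm.1 hA.isHermitian).apply i j
  rw [hji] at h
  linarith

end Matrix

def elliptope (ι : Type*) [Fintype ι] : Set (Matrix ι ι ℝ) :=
  {X | X.PosSemidef ∧ ∀ i, X i i = 1}

section Elliptope

variable {ι : Type*} [Fintype ι] {x : ι → ℝ}

theorem vecMulVec_mem_elliptope (hx : ∀ i, x i * x i = 1) : vecMulVec x x ∈ elliptope ι :=
  ⟨by simpa using posSemidef_vecMulVec_self_star x, hx⟩

variable [DecidableEq ι]

theorem smul_symmSingle_mem_normalConeM_elliptope (hx : ∀ i, x i * x i = 1) (i j : ι) :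
    (x i * x j) • symmSingle i j ∈ normalConeM (elliptope ι) (vecMulVec x x) := by
  refine ⟨(isSymm_symmSingle i j).smul _, fun Y hY => ?_⟩
  have hYsymm : Y.IsSymm := isHermitian_iff_isSymm.1 hY.1.isHermitian
  have hXsymm : (vecMulVec x x).IsSymm := IsSymm.ext fun k l => by simp [vecMulVec_apply, mul_comm]
  rw [smul_mul_assoc, smul_mul_assoc, trace_smul, trace_smul, trace_symmSingle_mul i j hYsymm,
    trace_symmSingle_mul i j hXsymm, vecMulVec_apply, smul_eq_mul, smul_eq_mul]
  have hentry := hY.1.two_mul_mul_apply_le (x i) (x j) i j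
  rw [hY.2 i, hY.2 j] at hentry
  nlinarith [hx i, hx j]

theorem span_normalConeM_elliptope (hx : ∀ i, x i * x i = 1) :
    Submodule.span ℝ (normalConeM (elliptope ι) (vecMulVec x x)) = symmetricSubmodule ι ℝ := by
  refine le_antisymm (Submodule.span_le.2 fun A hA => hA.1) ?_
  rw [← span_symmSingle, Submodule.span_le]
  rintro _ ⟨⟨i, j⟩, rfl⟩
  have hsq : (x i * x j) * (x i * x j) = 1 := by linear_combination (x j * x j) * hx i + hx j
  have h := Submodule.smul_mem _ (x i * x j)
    (Submodule.subset_span (smul_symmSingle_mem_normalConeM_elliptope hx i j))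
  rwa [smul_smul, hsq, one_smul] at h

end Elliptope

theorem cut_matrix_is_vertex_of_elliptope {n : ℕ} (x : Fin n → ℝ)
    (hx : ∀ i, x i = 1 ∨ x i = -1)
    (Ell : Set (Matrix (Fin n) (Fin n) ℝ))
    (hEll : Ell = {X | X.PosSemidef ∧ ∀ i, X i i = 1}) :
    IsVertex Ell (Matrix.vecMulVec x x) ∧
    ∀ i j : Fin n,
      (if x i * x j < 0 then (-1 : ℝ) else 1) •
          ((1 / 2 : ℝ) • (Matrix.single i j 1 + Matrix.single j i 1))
        ∈ normalConeM Ell (Matrix.vecMulVec x x) := by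
  change Ell = elliptope (Fin n) at hEll
  subst hEll
  have hx2 : ∀ i, x i * x i = 1 := fun i => by rcases hx i with h | h <;> norm_num [h]
  have hsign : ∀ i j, (if x i * x j < 0 then (-1 : ℝ) else 1) = x i * x j := fun i j => by
    rcases hx i with h | h <;> rcases hx j with h' | h' <;> norm_num [h, h']
  refine ⟨⟨vecMulVec_mem_elliptope hx2, ?_⟩, fun i j => ?_⟩
  · rw [span_normalConeM_elliptope hx2, finrank_symmetricSubmodule]
  · rw [hsign]
    exact smul_symmSingle_mem_normalConeM_elliptope hx2 i j
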